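/- arXiv:1712.07617 — 3 statements merged into one kernel-verified Lean document; each statement's English description precedes it below -/
import Mathlib

section
/- Let ν̃ ∈ (−1/2, 1) and Δv > 0. Let f : ℤ³ → [0,∞) be such that ρ := Σ_{j∈ℤ³} f_j Δv³ satisfies 0 < ρ < ∞ and Σ_j f_j |v_j|² Δv³ < ∞, where v_j = jΔv ∈ ℝ³. Define U = (1/ρ)Σ_j f_j v_j Δv³, T = (1/(3ρ))Σ_j f_j |v_j − U|² Δv³, Θ = (1/ρ)Σ_j f_j (v_j − U)⊗(v_j − U) Δv³ (a real symmetric 3×3 matrix), and 𝒯_{ν̃} = (1−ν̃)T·Id + ν̃Θ. Then for every k ∈ ℝ³, min{1−ν̃, 1+2ν̃}·T·|k|² ≤ kᵀ𝒯_{ν̃}k ≤ max{1−ν̃, 1+2ν̃}·T·|k|². -/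
noncomputable section

open Real MeasureTheory

/-- Velocity space `ℝ³`. -/
abbrev V3 := Fin 3 → ℝ

/-- Velocity grid index set `ℤ³`. -/
abbrev Idx3 := Fin 3 → ℤ

/-- Euclidean norm on `V3`. -/
def enorm3 (v : V3) : ℝ := Real.sqrt (∑ a, v a ^ 2)

/-- The velocity grid node `v_j = jΔv`. -/
def gridV (Δv : ℝ) (j : Idx3) : V3 := fun a => (j a : ℝ) * Δv

/-- Quadratic form `kᵀ A k` of a 3×3 matrix. -/
def quadForm (A : Matrix (Fin 3) (Fin 3) ℝ) (k : V3) : ℝ := ∑ a, ∑ b, k a * A a b * k b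

/-- The ellipsoidal Gaussian with density `ρ`, bulk velocity `U` and temperature tensor `T`. -/
def gaussianM (ρ : ℝ) (U : V3) (T : Matrix (Fin 3) (Fin 3) ℝ) (v : V3) : ℝ :=
  ρ / Real.sqrt ((2 * π) ^ 3 * T.det) *
    Real.exp (-(1 / 2) * quadForm T⁻¹ (fun a => v a - U a))

/-- Discrete density. -/
def dRho (Δv : ℝ) (h : Idx3 → ℝ) : ℝ := ∑' j : Idx3, h j * Δv ^ 3

/-- Discrete bulk velocity. -/
def dU (Δv : ℝ) (h : Idx3 → ℝ) : V3 :=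
  fun a => (dRho Δv h)⁻¹ * ∑' j : Idx3, h j * gridV Δv j a * Δv ^ 3

/-- Discrete temperature. -/
def dT (Δv : ℝ) (h : Idx3 → ℝ) : ℝ :=
  (3 * dRho Δv h)⁻¹ * ∑' j : Idx3, h j * enorm3 (fun a => gridV Δv j a - dU Δv h a) ^ 2 * Δv ^ 3

/-- Discrete stress tensor. -/
def dTheta (Δv : ℝ) (h : Idx3 → ℝ) : Matrix (Fin 3) (Fin 3) ℝ :=
  Matrix.of fun a b =>
    (dRho Δv h)⁻¹ *
      ∑' j : Idx3, h j * (gridV Δv j a - dU Δv h a) * (gridV Δv j b - dU Δv h b) * Δv ^ 3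

/-- The temperature tensor `(1−ν)T·Id + νΘ`. -/
def tensorOf (ν T : ℝ) (Θ : Matrix (Fin 3) (Fin 3) ℝ) : Matrix (Fin 3) (Fin 3) ℝ :=
  ((1 - ν) * T) • (1 : Matrix (Fin 3) (Fin 3) ℝ) + ν • Θ

/-- Continuous density. -/
def cRho (F : V3 → ℝ) : ℝ := ∫ v : V3, F v

/-- Continuous bulk velocity. -/
def cU (F : V3 → ℝ) : V3 := fun a => (cRho F)⁻¹ * ∫ v : V3, F v * v a

/-- Continuous temperature. -/
def cT (F : V3 → ℝ) : ℝ :=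
  (3 * cRho F)⁻¹ * ∫ v : V3, F v * enorm3 (fun a => v a - cU F a) ^ 2

/-- Continuous stress tensor. -/
def cTheta (F : V3 → ℝ) : Matrix (Fin 3) (Fin 3) ℝ :=
  Matrix.of fun a b => (cRho F)⁻¹ * ∫ v : V3, F v * (v a - cU F a) * (v b - cU F b)

/-- Collision frequency `A_ν = (1−ν)⁻¹`. -/
def Anu (ν : ℝ) : ℝ := (1 - ν)⁻¹

/-- The modified relaxation parameter `nt = κν/(κ+Δt)`. -/
def nuTilde (κ ν Δt : ℝ) : ℝ := κ * ν / (κ + Δt)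

/-- `s(i,j)`: the unique integer with `sΔx ≤ iΔx − Δt v_{j,1} < (s+1)Δx`. -/
def sIdx (Δx Δt Δv : ℝ) (i : ℤ) (j : Idx3) : ℤ :=
  ⌊((i : ℝ) * Δx - Δt * ((j 0 : ℝ) * Δv)) / Δx⌋

/-- Linear reconstruction of a grid function at the foot of the characteristic. -/
def recon (Δx Δt Δv : ℝ) (g : ℤ → Idx3 → ℝ) (i : ℤ) (j : Idx3) : ℝ :=
  (((i : ℝ) * Δx - Δt * ((j 0 : ℝ) * Δv) - (sIdx Δx Δt Δv i j : ℝ) * Δx) / Δx) *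
      g (sIdx Δx Δt Δv i j + 1) j
    + ((((sIdx Δx Δt Δv i j : ℝ) + 1) * Δx - ((i : ℝ) * Δx - Δt * ((j 0 : ℝ) * Δv))) / Δx) *
      g (sIdx Δx Δt Δv i j) j

/-- Discrete ellipsoidal Gaussian built from a velocity grid function `h`. -/
def gaussD (nt Δv : ℝ) (h : Idx3 → ℝ) (j : Idx3) : ℝ :=
  gaussianM (dRho Δv h) (dU Δv h) (tensorOf nt (dT Δv h) (dTheta Δv h)) (gridV Δv j)

/-- The shifted initial datum `v ↦ f₀(x_i − Δt v₁, v)`. -/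
def shift0 (f₀ : ℝ → V3 → ℝ) (Δx Δt : ℝ) (i : ℤ) : V3 → ℝ :=
  fun v => f₀ ((i : ℝ) * Δx - Δt * v 0) v

/-- Step-0 ellipsoidal Gaussian, built from the continuous macroscopic fields of `f̃⁰`. -/
def gauss0 (f₀ : ℝ → V3 → ℝ) (κ ν Δx Δt Δv : ℝ) (i : ℤ) (j : Idx3) : ℝ :=
  gaussianM (cRho (shift0 f₀ Δx Δt i)) (cU (shift0 f₀ Δx Δt i))
    (tensorOf (nuTilde κ ν Δt) (cT (shift0 f₀ Δx Δt i)) (cTheta (shift0 f₀ Δx Δt i)))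
    (gridV Δv j)

/-- `f̃⁰_{i,j} = f₀(x_i − Δt v_{j,1}, v_j)`. -/
def tilde0 (f₀ : ℝ → V3 → ℝ) (Δx Δt Δv : ℝ) (i : ℤ) (j : Idx3) : ℝ :=
  f₀ ((i : ℝ) * Δx - Δt * ((j 0 : ℝ) * Δv)) (gridV Δv j)

/-- The semi-Lagrangian scheme iterates `fⁿ_{i,j}`. -/
def schemeF (f₀ : ℝ → V3 → ℝ) (κ ν Δx Δt Δv : ℝ) : ℕ → ℤ → Idx3 → ℝ
  | 0 => fun i j => f₀ ((i : ℝ) * Δx) (gridV Δv j)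
  | 1 => fun i j =>
      (κ / (κ + Anu ν * Δt)) * tilde0 f₀ Δx Δt Δv i j
        + (Anu ν * Δt / (κ + Anu ν * Δt)) * gauss0 f₀ κ ν Δx Δt Δv i j
  | (n + 2) => fun i j =>
      (κ / (κ + Anu ν * Δt)) * recon Δx Δt Δv (schemeF f₀ κ ν Δx Δt Δv (n + 1)) i j
        + (Anu ν * Δt / (κ + Anu ν * Δt)) *
            gaussD (nuTilde κ ν Δt) Δv (recon Δx Δt Δv (schemeF f₀ κ ν Δx Δt Δv (n + 1)) i) j

/-- The reconstructed scheme iterates `f̃ⁿ_{i,j}`. -/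
def schemeTilde (f₀ : ℝ → V3 → ℝ) (κ ν Δx Δt Δv : ℝ) : ℕ → ℤ → Idx3 → ℝ
  | 0 => tilde0 f₀ Δx Δt Δv
  | (n + 1) => recon Δx Δt Δv (schemeF f₀ κ ν Δx Δt Δv (n + 1))

/-- The ellipsoidal Gaussian used in the `n → n+1` update of the scheme. -/
def schemeGauss (f₀ : ℝ → V3 → ℝ) (κ ν Δx Δt Δv : ℝ) : ℕ → ℤ → Idx3 → ℝ
  | 0 => gauss0 f₀ κ ν Δx Δt Δv
  | (n + 1) => fun i j =>
      gaussD (nuTilde κ ν Δt) Δv (schemeTilde f₀ κ ν Δx Δt Δv (n + 1) i) j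

/-- Discrete density of `f̃ⁿ` at spatial node `i` (continuous fields at step 0). -/
def schemeRho (f₀ : ℝ → V3 → ℝ) (κ ν Δx Δt Δv : ℝ) : ℕ → ℤ → ℝ
  | 0 => fun i => cRho (shift0 f₀ Δx Δt i)
  | (n + 1) => fun i => dRho Δv (schemeTilde f₀ κ ν Δx Δt Δv (n + 1) i)

/-- Discrete bulk velocity of `f̃ⁿ` at spatial node `i` (continuous fields at step 0). -/
def schemeU (f₀ : ℝ → V3 → ℝ) (κ ν Δx Δt Δv : ℝ) : ℕ → ℤ → V3
  | 0 => fun i => cU (shift0 f₀ Δx Δt i)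
  | (n + 1) => fun i => dU Δv (schemeTilde f₀ κ ν Δx Δt Δv (n + 1) i)

/-- Discrete temperature of `f̃ⁿ` at spatial node `i` (continuous fields at step 0). -/
def schemeTemp (f₀ : ℝ → V3 → ℝ) (κ ν Δx Δt Δv : ℝ) : ℕ → ℤ → ℝ
  | 0 => fun i => cT (shift0 f₀ Δx Δt i)
  | (n + 1) => fun i => dT Δv (schemeTilde f₀ κ ν Δx Δt Δv (n + 1) i)

/-- Weighted `L∞_q` norm of the initial datum. -/
def normLq (q : ℝ) (f₀ : ℝ → V3 → ℝ) : ℝ :=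
  ⨆ x : ℝ, ⨆ v : V3, |f₀ x v| * (1 + enorm3 v) ^ q

/-!
Write `w j = f j Δv³` and `c j = v_j − U`. Then `ρ Θ` is the weighted second moment
`∑ w j (c j ⊗ c j)`, so `kᵀΘk = ρ⁻¹ ∑ w j (c j · k)²`, which lies between `0` and
`ρ⁻¹ ∑ w j |c j|² |k|² = 3T|k|²` by Cauchy–Schwarz. Since
`kᵀ𝒯k = (1 − ν)T|k|² + ν kᵀΘk` is affine in `ν`, the two extreme values of `kᵀΘk` give the bounds,
the case split being on the sign of `ν`.
-/

open Finset Matrix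

section WeightedSecondMoment

variable {ι m : Type*} [Fintype m]

lemma dotProduct_sq_le_dotProduct_self_mul (u v : m → ℝ) :
    (u ⬝ᵥ v) ^ 2 ≤ (u ⬝ᵥ u) * (v ⬝ᵥ v) := by
  simpa only [dotProduct, sq] using sum_mul_sq_le_sq_mul_sq univ u v

lemma sub_dotProduct_sub_le (u v : m → ℝ) :
    (u - v) ⬝ᵥ (u - v) ≤ 2 * (u ⬝ᵥ u) + 2 * (v ⬝ᵥ v) := by
  have h : 0 ≤ (u + v) ⬝ᵥ (u + v) := by simpa using dotProduct_self_star_nonneg (u + v)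
  simp only [sub_dotProduct, dotProduct_sub, add_dotProduct, dotProduct_add,
    dotProduct_comm v u] at h ⊢
  linarith

lemma abs_mul_apply_le_dotProduct_self (c : m → ℝ) (a b : m) : |c a * c b| ≤ c ⬝ᵥ c := by
  have hc (i : m) : c i * c i ≤ c ⬝ᵥ c :=
    single_le_sum (fun i _ => mul_self_nonneg (c i)) (mem_univ i)
  have ha := hc a
  have hb := hc b
  exact abs_le.2 ⟨by nlinarith [sq_nonneg (c a + c b)], by nlinarith [sq_nonneg (c a - c b)]⟩

def weightedSecondMoment (w : ι → ℝ) (c : ι → m → ℝ) : Matrix m m ℝ :=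
  Matrix.of fun a b => ∑' j, w j * c j a * c j b

variable {w : ι → ℝ} {c : ι → m → ℝ}

lemma summable_mul_sub_dotProduct_sub {v : ι → m → ℝ} (hw : ∀ j, 0 ≤ w j) (h0 : Summable w)
    (h2 : Summable fun j => w j * (v j ⬝ᵥ v j)) (u : m → ℝ) :
    Summable fun j => w j * ((v j - u) ⬝ᵥ (v j - u)) := by
  refine ((h2.mul_left 2).add (h0.mul_left (2 * (u ⬝ᵥ u)))).of_nonneg_of_le
    (fun j => mul_nonneg (hw j) (by simpa using dotProduct_self_star_nonneg (v j - u)))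
    fun j => ?_
  nlinarith [mul_le_mul_of_nonneg_left (sub_dotProduct_sub_le (v j) u) (hw j)]

lemma summable_weightedSecondMoment_apply (hc : Summable fun j => w j * (c j ⬝ᵥ c j))
    (a b : m) : Summable fun j => w j * c j a * c j b := by
  refine hc.abs.of_norm_bounded fun j => ?_
  rw [Real.norm_eq_abs, mul_assoc, abs_mul, abs_mul (w j)]
  exact mul_le_mul_of_nonneg_left
    ((abs_mul_apply_le_dotProduct_self (c j) a b).trans (le_abs_self _)) (abs_nonneg _)

lemma dotProduct_mulVec_weightedSecondMoment (hc : Summable fun j => w j * (c j ⬝ᵥ c j))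
    (k : m → ℝ) :
    k ⬝ᵥ (weightedSecondMoment w c *ᵥ k) = ∑' j, w j * (c j ⬝ᵥ k) ^ 2 := by
  have hab (a b : m) : Summable fun j => k a * (w j * c j a * c j b * k b) :=
    ((summable_weightedSecondMoment_apply hc a b).mul_right (k b)).mul_left (k a)
  calc k ⬝ᵥ (weightedSecondMoment w c *ᵥ k)
      = ∑ a, ∑ b, ∑' j, k a * (w j * c j a * c j b * k b) := by
        simp only [dotProduct, mulVec, weightedSecondMoment, of_apply, mul_sum, tsum_mul_left,
          tsum_mul_right]
    _ = ∑ a, ∑' j, ∑ b, k a * (w j * c j a * c j b * k b) :=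
        sum_congr rfl fun a _ => (Summable.tsum_finsetSum fun b _ => hab a b).symm
    _ = ∑' j, ∑ a, ∑ b, k a * (w j * c j a * c j b * k b) :=
        (Summable.tsum_finsetSum fun a _ => summable_sum fun b _ => hab a b).symm
    _ = ∑' j, w j * (c j ⬝ᵥ k) ^ 2 := by
        refine tsum_congr fun j => ?_
        simp only [dotProduct, sq, mul_sum, sum_mul]
        exact sum_congr rfl fun a _ => sum_congr rfl fun b _ => by ring

lemma tsum_mul_dotProduct_sq_le (hw : ∀ j, 0 ≤ w j)
    (hc : Summable fun j => w j * (c j ⬝ᵥ c j)) (k : m → ℝ) :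
    ∑' j, w j * (c j ⬝ᵥ k) ^ 2 ≤ (∑' j, w j * (c j ⬝ᵥ c j)) * (k ⬝ᵥ k) := by
  have hle (j : ι) : w j * (c j ⬝ᵥ k) ^ 2 ≤ w j * (c j ⬝ᵥ c j) * (k ⬝ᵥ k) := by
    rw [mul_assoc]
    exact mul_le_mul_of_nonneg_left (dotProduct_sq_le_dotProduct_self_mul _ _) (hw j)
  have hsum : Summable fun j => w j * (c j ⬝ᵥ k) ^ 2 :=
    (hc.mul_right _).of_nonneg_of_le (fun j => mul_nonneg (hw j) (sq_nonneg _)) hle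
  rw [← tsum_mul_right]
  exact hsum.tsum_le_tsum hle (hc.mul_right _)

end WeightedSecondMoment

lemma one_sub_mul_add_mul_mem_Icc {ν t q : ℝ} (hq₀ : 0 ≤ q) (hq : q ≤ 3 * t) :
    (1 - ν) * t + ν * q ∈
      Set.Icc (min (1 - ν) (1 + 2 * ν) * t) (max (1 - ν) (1 + 2 * ν) * t) := by
  rcases le_total 0 ν with hν | hν
  · rw [min_eq_left (by linarith), max_eq_right (by linarith)]
    constructor <;> nlinarith
  · rw [min_eq_right (by linarith), max_eq_left (by linarith)]
    constructor <;> nlinarith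

lemma enorm3_sq (v : V3) : enorm3 v ^ 2 = v ⬝ᵥ v := by
  rw [enorm3, Real.sq_sqrt (sum_nonneg fun a _ => sq_nonneg (v a))]
  simp only [dotProduct, sq]

lemma quadForm_eq_dotProduct_mulVec (A : Matrix (Fin 3) (Fin 3) ℝ) (k : V3) :
    quadForm A k = k ⬝ᵥ (A *ᵥ k) := by
  simp only [quadForm, dotProduct, mulVec, mul_sum, mul_assoc]

lemma quadForm_tensorOf (ν T : ℝ) (Θ : Matrix (Fin 3) (Fin 3) ℝ) (k : V3) :
    quadForm (tensorOf ν T Θ) k = (1 - ν) * T * (k ⬝ᵥ k) + ν * quadForm Θ k := by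
  simp only [quadForm_eq_dotProduct_mulVec, tensorOf, add_mulVec, smul_mulVec, one_mulVec,
    dotProduct_add, dotProduct_smul, smul_eq_mul]

lemma dTheta_eq_smul_weightedSecondMoment (Δv : ℝ) (f : Idx3 → ℝ) :
    dTheta Δv f = (dRho Δv f)⁻¹ •
      weightedSecondMoment (fun j => f j * Δv ^ 3) (fun j => gridV Δv j - dU Δv f) := by
  ext a b
  simp only [dTheta, weightedSecondMoment, of_apply, Matrix.smul_apply, smul_eq_mul,
    Pi.sub_apply]
  congr 1
  exact tsum_congr fun j => by ring

lemma three_mul_dT (Δv : ℝ) (f : Idx3 → ℝ) :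
    3 * dT Δv f = (dRho Δv f)⁻¹ * ∑' j, f j * Δv ^ 3 *
      ((gridV Δv j - dU Δv f) ⬝ᵥ (gridV Δv j - dU Δv f)) := by
  have h (j : Idx3) : f j * enorm3 (fun a => gridV Δv j a - dU Δv f a) ^ 2 * Δv ^ 3
      = f j * Δv ^ 3 * ((gridV Δv j - dU Δv f) ⬝ᵥ (gridV Δv j - dU Δv f)) := by
    rw [← Pi.sub_def, enorm3_sq]; ring
  rw [dT, tsum_congr h, mul_inv, ← mul_assoc, ← mul_assoc, mul_inv_cancel₀ three_ne_zero,
    one_mul]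

theorem discrete_temperature_tensor_equivalence_general
    (nt Δv : ℝ) (hΔv : 0 < Δv)
    (f : Idx3 → ℝ) (hf : ∀ j, 0 ≤ f j)
    (hsum0 : Summable fun j : Idx3 => f j * Δv ^ 3)
    (hsum2 : Summable fun j : Idx3 => f j * enorm3 (gridV Δv j) ^ 2 * Δv ^ 3) :
    ∀ k : V3,
      min (1 - nt) (1 + 2 * nt) * dT Δv f * enorm3 k ^ 2
          ≤ quadForm (tensorOf nt (dT Δv f) (dTheta Δv f)) k ∧
        quadForm (tensorOf nt (dT Δv f) (dTheta Δv f)) k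
          ≤ max (1 - nt) (1 + 2 * nt) * dT Δv f * enorm3 k ^ 2 := by
  intro k
  set w : Idx3 → ℝ := fun j => f j * Δv ^ 3
  set c : Idx3 → V3 := fun j => gridV Δv j - dU Δv f
  have hw (j : Idx3) : 0 ≤ w j := mul_nonneg (hf j) (by positivity)
  have hc : Summable fun j => w j * (c j ⬝ᵥ c j) :=
    summable_mul_sub_dotProduct_sub hw hsum0
      (hsum2.congr fun j => by simp only [w, enorm3_sq]; ring) (dU Δv f)
  have hQ : quadForm (dTheta Δv f) k = (dRho Δv f)⁻¹ * ∑' j, w j * (c j ⬝ᵥ k) ^ 2 := by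
    rw [quadForm_eq_dotProduct_mulVec, dTheta_eq_smul_weightedSecondMoment, smul_mulVec,
      dotProduct_smul, dotProduct_mulVec_weightedSecondMoment hc, smul_eq_mul]
  have hρinv : 0 ≤ (dRho Δv f)⁻¹ := inv_nonneg.2 (tsum_nonneg hw)
  have hQ₀ : 0 ≤ quadForm (dTheta Δv f) k :=
    hQ ▸ mul_nonneg hρinv (tsum_nonneg fun j => mul_nonneg (hw j) (sq_nonneg _))
  have hQle : quadForm (dTheta Δv f) k ≤ 3 * (dT Δv f * (k ⬝ᵥ k)) := by
    rw [hQ, ← mul_assoc, three_mul_dT, mul_assoc]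
    exact mul_le_mul_of_nonneg_left (tsum_mul_dotProduct_sq_le hw hc k) hρinv
  simpa only [Set.mem_Icc, quadForm_tensorOf, enorm3_sq, mul_assoc] using
    one_sub_mul_add_mul_mem_Icc (ν := nt) hQ₀ hQle

/-- equivalence of the discrete temperature tensor with the discrete temperature,
as quadratic forms. -/
theorem discrete_temperature_tensor_equivalence
    (nt Δv : ℝ) (hnt : nt ∈ Set.Ioo (-(1 / 2) : ℝ) 1) (hΔv : 0 < Δv)
    (f : Idx3 → ℝ) (hf : ∀ j, 0 ≤ f j)
    (hsum0 : Summable fun j : Idx3 => f j * Δv ^ 3)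
    (hsum2 : Summable fun j : Idx3 => f j * enorm3 (gridV Δv j) ^ 2 * Δv ^ 3)
    (hρ : 0 < dRho Δv f) :
    ∀ k : V3,
      min (1 - nt) (1 + 2 * nt) * dT Δv f * enorm3 k ^ 2
          ≤ quadForm (tensorOf nt (dT Δv f) (dTheta Δv f)) k ∧
        quadForm (tensorOf nt (dT Δv f) (dTheta Δv f)) k
          ≤ max (1 - nt) (1 + 2 * nt) * dT Δv f * enorm3 k ^ 2 :=
  discrete_temperature_tensor_equivalence_general nt Δv hΔv f hf hsum0 hsum2
end
end

section
/- Let q > 5 and Δv > 0. There exists a constant C_M > 0, depending only on q, with the following property. Let f : ℤ³ → [0,∞) satisfy 0 < N := sup_{j∈ℤ³} f_j(1+|v_j|)^q < ∞, where v_j = jΔv ∈ ℝ³, and let ρ = Σ_j f_j Δv³ > 0, U = (1/ρ)Σ_j f_j v_j Δv³, T = (1/(3ρ))Σ_j f_j|v_j − U|² Δv³ > 0. If Δv ≤ (3ρT/(8πN))^{1/5}, then ρ ≤ C_M · T^{3/2} · N. -/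
/-!
Split the mass at `|v_j - U| = √(6T)`. By Chebyshev the far nodes carry at most `ρ/2`, since the
second moment is `3ρT`; the near nodes lie in a cube containing at most `((2√(6T) + Δv)/Δv)³`
nodes, each of mass at most `N Δv³`. Hence `ρ ≤ 2 (2√(6T) + Δv)³ N`. If `Δv > √(6T)` this gives
`ρ ≤ 54 Δv³ N`, and the hypothesis `8πN Δv⁵ ≤ 3ρT` then forces `Δv² ≤ 162T/(8π) < 9T`; so in all
cases `Δv ≤ 3√T`, and `ρ ≤ 2 (8√T)³ N`.
-/

noncomputable section

open Real MeasureTheory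

lemma summable_of_tsum_ne_zero {ι : Type*} {g : ι → ℝ} (h : ∑' i, g i ≠ 0) : Summable g :=
  by_contra fun hg => h (tsum_eq_zero_of_not_summable hg)

/-- Chebyshev's inequality for weighted sums. -/
lemma tsum_le_tsum_subtype_add_moment_div_sq {ι : Type*} {w d : ι → ℝ} (hw : ∀ i, 0 ≤ w i)
    (hws : Summable w) (hmom : Summable fun i => w i * d i ^ 2) {R : ℝ} (hR : 0 < R) :
    ∑' i, w i ≤ ∑' i : {i | d i ≤ R}, w i + (∑' i, w i * d i ^ 2) / R ^ 2 := by
  set S := {i | d i ≤ R}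
  rw [← (hws.subtype S).tsum_add_tsum_compl (hws.subtype Sᶜ)]
  refine add_le_add le_rfl ?_
  have hfar : ∀ i : ↥Sᶜ, w i ≤ w i * d i ^ 2 / R ^ 2 := fun ⟨i, hi⟩ => by
    have hRd : R ^ 2 ≤ d i ^ 2 := pow_le_pow_left₀ hR.le (le_of_lt (not_le.mp hi)) 2
    rw [le_div_iff₀ (by positivity)]
    exact mul_le_mul_of_nonneg_left hRd (hw i)
  calc ∑' i : ↥Sᶜ, w i ≤ ∑' i : ↥Sᶜ, w i * d i ^ 2 / R ^ 2 :=
        (hws.subtype _).tsum_le_tsum hfar ((hmom.div_const _).subtype _)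
    _ ≤ ∑' i, w i * d i ^ 2 / R ^ 2 :=
        (hmom.div_const _).tsum_subtype_le _ _ fun i => by have := hw i; positivity
    _ = (∑' i, w i * d i ^ 2) / R ^ 2 := tsum_div_const

lemma card_Icc_ceil_floor_le {a b : ℝ} (hab : a ≤ b + 1) :
    ((Finset.Icc ⌈a⌉ ⌊b⌋).card : ℝ) ≤ b - a + 1 := by
  rw [Int.card_Icc, ← Int.cast_natCast, Int.toNat_eq_max]
  push_cast
  refine max_le ?_ (by linarith)
  linarith [Int.floor_le b, Int.le_ceil a]

lemma enorm3_nonneg (v : V3) : 0 ≤ enorm3 v := Real.sqrt_nonneg _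

lemma abs_le_enorm3 (v : V3) (a : Fin 3) : |v a| ≤ enorm3 v := by
  rw [← Real.sqrt_sq_eq_abs]
  exact Real.sqrt_le_sqrt (Finset.single_le_sum (fun b _ => sq_nonneg (v b)) (Finset.mem_univ a))

def gridBox (Δv R : ℝ) (U : V3) : Finset Idx3 :=
  Fintype.piFinset fun a => Finset.Icc ⌈(U a - R) / Δv⌉ ⌊(U a + R) / Δv⌋

lemma mem_gridBox {Δv R : ℝ} (hΔv : 0 < Δv) {U : V3} {j : Idx3}
    (hj : enorm3 (fun a => gridV Δv j a - U a) ≤ R) : j ∈ gridBox Δv R U := by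
  simp only [gridBox, Fintype.mem_piFinset, Finset.mem_Icc, Int.ceil_le, Int.le_floor,
    div_le_iff₀ hΔv, le_div_iff₀ hΔv]
  intro a
  have := (abs_le_enorm3 _ a).trans hj
  simp only [gridV, abs_le] at this
  constructor <;> linarith

lemma card_gridBox_le {Δv R : ℝ} (hΔv : 0 < Δv) (hR : 0 ≤ R) (U : V3) :
    ((gridBox Δv R U).card : ℝ) ≤ ((2 * R + Δv) / Δv) ^ 3 := by
  have hside : ∀ a, (U a + R) / Δv - (U a - R) / Δv + 1 = (2 * R + Δv) / Δv := fun a => by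
    field_simp; ring
  rw [gridBox, Fintype.card_piFinset]
  push_cast
  calc ∏ a, ((Finset.Icc ⌈(U a - R) / Δv⌉ ⌊(U a + R) / Δv⌋).card : ℝ)
      ≤ ∏ _a : Fin 3, (2 * R + Δv) / Δv := by
        gcongr with a
        have hwidth : 0 ≤ (2 * R + Δv) / Δv := by positivity
        rw [← hside a]
        exact card_Icc_ceil_floor_le (by linarith [hside a])
    _ = ((2 * R + Δv) / Δv) ^ 3 := by simp [div_pow]

/-- At most `((2R + Δv)/Δv)³` grid nodes lie in a ball of radius `R`. -/
lemma tsum_ball_le {Δv R : ℝ} (hΔv : 0 < Δv) (hR : 0 ≤ R) (U : V3) {g : Idx3 → ℝ}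
    (hg0 : ∀ j, 0 ≤ g j) (hg : Summable g) {M : ℝ} (hM : ∀ j, g j ≤ M) :
    ∑' j : {j : Idx3 | enorm3 (fun a => gridV Δv j a - U a) ≤ R}, g j
      ≤ ((2 * R + Δv) / Δv) ^ 3 * M := by
  have hM0 : 0 ≤ M := (hg0 0).trans (hM 0)
  have hbox : {j : Idx3 | enorm3 (fun a => gridV Δv j a - U a) ≤ R} ⊆ gridBox Δv R U :=
    fun _ hj => mem_gridBox hΔv hj
  calc ∑' j : {j : Idx3 | enorm3 (fun a => gridV Δv j a - U a) ≤ R}, g j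
      ≤ ∑' j : ↑(gridBox Δv R U : Set Idx3), g j :=
        (hg.subtype _).tsum_le_tsum_of_inj (Set.inclusion hbox) (Set.inclusion_injective hbox)
          (fun j _ => hg0 j) (fun _ => le_rfl) (hg.subtype _)
    _ = ∑ j ∈ gridBox Δv R U, g j := Finset.tsum_subtype _ g
    _ ≤ (gridBox Δv R U).card * M := by
        simpa using Finset.sum_le_sum fun j (_ : j ∈ gridBox Δv R U) => hM j
    _ ≤ ((2 * R + Δv) / Δv) ^ 3 * M := by gcongr; exact card_gridBox_le hΔv hR U

lemma tsum_mul_enorm3_sq_eq {Δv : ℝ} {f : Idx3 → ℝ} (hρ : dRho Δv f ≠ 0) :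
    ∑' j, f j * enorm3 (fun a => gridV Δv j a - dU Δv f a) ^ 2 * Δv ^ 3
      = 3 * dRho Δv f * dT Δv f := by
  rw [dT, ← mul_assoc, mul_inv_cancel₀ (by positivity), one_mul]

lemma dRho_le_of_forall_le {Δv N : ℝ} (hΔv : 0 < Δv) {f : Idx3 → ℝ} (hf : ∀ j, 0 ≤ f j)
    (hfN : ∀ j, f j ≤ N) (hρ : 0 < dRho Δv f) (hT : 0 < dT Δv f) :
    dRho Δv f ≤ 2 * (2 * √(6 * dT Δv f) + Δv) ^ 3 * N := by
  set R := √(6 * dT Δv f)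
  have hR : 0 < R := Real.sqrt_pos.mpr (by positivity)
  have hR2 : R ^ 2 = 6 * dT Δv f := Real.sq_sqrt (by positivity)
  have hmass : Summable fun j => f j * Δv ^ 3 := summable_of_tsum_ne_zero hρ.ne'
  have hmom := tsum_mul_enorm3_sq_eq hρ.ne'
  simp only [mul_right_comm (f _) (enorm3 _ ^ 2)] at hmom
  have hmoms : Summable fun j => f j * Δv ^ 3 * enorm3 (fun a => gridV Δv j a - dU Δv f a) ^ 2 :=
    summable_of_tsum_ne_zero (by rw [hmom]; positivity)
  have hsplit := tsum_le_tsum_subtype_add_moment_div_sq (fun j => by have := hf j; positivity)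
    hmass hmoms hR
  have hnear := tsum_ball_le hΔv hR.le (dU Δv f) (fun j => by have := hf j; positivity) hmass
    (fun j => mul_le_mul_of_nonneg_right (hfN j) (by positivity))
  rw [← dRho, hmom, hR2] at hsplit
  have hfar : 3 * dRho Δv f * dT Δv f / (6 * dT Δv f) = dRho Δv f / 2 := by
    field_simp; ring
  have hcube : ((2 * R + Δv) / Δv) ^ 3 * (N * Δv ^ 3) = (2 * R + Δv) ^ 3 * N := by
    field_simp
  linarith

lemma le_three_sqrt_of_le_rpow {Δv ρ T N : ℝ} (hΔv : 0 < Δv) (hρ0 : 0 ≤ ρ) (hT : 0 < T)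
    (hN : 0 < N) (hρ : ρ ≤ 2 * (2 * √(6 * T) + Δv) ^ 3 * N)
    (hΔ : Δv ≤ (3 * ρ * T / (8 * π * N)) ^ ((1 : ℝ) / 5)) :
    Δv ≤ 3 * √T := by
  have h9 : 3 * √T = √(9 * T) := by
    rw [Real.sqrt_mul (by norm_num), show (9 : ℝ) = 3 ^ 2 by norm_num, Real.sqrt_sq (by norm_num)]
  have hsqrt6 : √(6 * T) ≤ 3 * √T := h9 ▸ Real.sqrt_le_sqrt (by linarith)
  rcases le_or_gt Δv (√(6 * T)) with hsmall | hlarge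
  · exact hsmall.trans hsqrt6
  have hρ' : ρ ≤ 54 * Δv ^ 3 * N := by
    have : (2 * √(6 * T) + Δv) ^ 3 ≤ (3 * Δv) ^ 3 := by gcongr; linarith
    nlinarith
  have h5 : Δv ^ 5 * (8 * π * N) ≤ 3 * ρ * T := by
    rw [one_div, Real.le_rpow_inv_iff_of_pos hΔv.le (by positivity) (by norm_num),
      le_div_iff₀ (by positivity)] at hΔ
    exact_mod_cast hΔ
  have hsq : Δv ^ 2 ≤ 9 * T := by
    have hπ := Real.pi_gt_three
    have : Δv ^ 3 * N * (8 * π * Δv ^ 2) ≤ Δv ^ 3 * N * (162 * T) := by nlinarith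
    nlinarith [le_of_mul_le_mul_left this (by positivity)]
  rw [h9]
  exact (Real.le_sqrt hΔv.le (by positivity)).mpr hsq

/-- discrete moment estimate `ρ ≤ C_M T^{3/2} N`. -/
theorem discrete_moment_estimate_one (q : ℝ) (hq : 5 < q) :
    ∃ C > 0, ∀ (Δv : ℝ), 0 < Δv → ∀ f : Idx3 → ℝ, (∀ j, 0 ≤ f j) →
      BddAbove (Set.range fun j : Idx3 => f j * (1 + enorm3 (gridV Δv j)) ^ q) →
      0 < (⨆ j : Idx3, f j * (1 + enorm3 (gridV Δv j)) ^ q) →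
      0 < dRho Δv f → 0 < dT Δv f →
      Δv ≤ (3 * dRho Δv f * dT Δv f /
            (8 * π * ⨆ j : Idx3, f j * (1 + enorm3 (gridV Δv j)) ^ q)) ^ ((1 : ℝ) / 5) →
      dRho Δv f ≤ C * dT Δv f ^ ((3 : ℝ) / 2) *
        ⨆ j : Idx3, f j * (1 + enorm3 (gridV Δv j)) ^ q := by
  refine ⟨1024, by norm_num, fun Δv hΔv f hf hbdd hN hρ hT hΔ => ?_⟩
  set N := ⨆ j : Idx3, f j * (1 + enorm3 (gridV Δv j)) ^ q
  have hfN : ∀ j, f j ≤ N := fun j =>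
    (le_mul_of_one_le_right (hf j)
      (Real.one_le_rpow (by linarith [enorm3_nonneg (gridV Δv j)]) (by linarith))).trans
      (le_ciSup hbdd j)
  have hρN := dRho_le_of_forall_le hΔv hf hfN hρ hT
  have hstep := le_three_sqrt_of_le_rpow hΔv hρ.le hT hN hρN hΔ
  have hsqrt6 : √(6 * dT Δv f) ≤ 5 / 2 * √(dT Δv f) := by
    rw [Real.sqrt_mul (by norm_num)]
    gcongr
    rw [Real.sqrt_le_left (by norm_num)]
    norm_num
  calc dRho Δv f ≤ 2 * (2 * √(6 * dT Δv f) + Δv) ^ 3 * N := hρN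
    _ ≤ 2 * (8 * √(dT Δv f)) ^ 3 * N := by gcongr; linarith
    _ = 1024 * dT Δv f ^ ((3 : ℝ) / 2) * N := by
        rw [Real.rpow_div_two_eq_sqrt _ hT.le]
        norm_cast
        ring

end
end

section
/- Let n ≥ 1 and suppose that for every 0 ≤ m < n, all i ∈ ℤ and j ∈ ℤ³, the discrete ellipsoidal Gaussian satisfies M_{ν̃,j}(f̃^m_i) ≥ 0, and suppose that f̃⁰_{i,j} ≥ c₁e^{−c₂|v_j|^α} for all i,j, where c₁, c₂, α > 0. Then for all i ∈ ℤ, j ∈ ℤ³: f ⁿ_{i,j} ≥ c₁(κ/(κ+A_νΔt))ⁿ e^{−c₂|v_j|^α} and f̃ ⁿ_{i,j} ≥ c₁(κ/(κ+A_νΔt))ⁿ e^{−c₂|v_j|^α} ≥ c₁e^{−(A_ν/κ)nΔt}e^{−c₂|v_j|^α}. -/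
/-! The update `fⁿ⁺¹ = κ/(κ+A_νΔt) f̃ⁿ + A_νΔt/(κ+A_νΔt) M(f̃ⁿ)` has nonnegative weights, so when the
Gaussian is nonnegative a lower bound on `f̃ⁿ` passes to `fⁿ⁺¹` at the cost of the factor
`κ/(κ+A_νΔt)`. The linear reconstruction `f̃ⁿ⁺¹` is a convex combination of neighbouring values of
`fⁿ⁺¹`, so it keeps any lower bound that does not depend on the spatial index. Finally `1 + x ≤ eˣ`
turns the geometric factor into `e^{-(A_ν/κ) n Δt}`. -/

noncomputable section

open Real MeasureTheory

lemma Anu_pos {ν : ℝ} (hν : ν < 1) : 0 < Anu ν :=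
  inv_pos.mpr (sub_pos.mpr hν)

lemma recon_eq_fract (Δx Δt Δv : ℝ) (hΔx : Δx ≠ 0) (g : ℤ → Idx3 → ℝ) (i : ℤ) (j : Idx3) :
    recon Δx Δt Δv g i j =
      Int.fract (((i : ℝ) * Δx - Δt * ((j 0 : ℝ) * Δv)) / Δx) *
          g (⌊((i : ℝ) * Δx - Δt * ((j 0 : ℝ) * Δv)) / Δx⌋ + 1) j
        + (1 - Int.fract (((i : ℝ) * Δx - Δt * ((j 0 : ℝ) * Δv)) / Δx)) *
          g ⌊((i : ℝ) * Δx - Δt * ((j 0 : ℝ) * Δv)) / Δx⌋ j := by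
  unfold recon sIdx Int.fract
  congr 2
  · field_simp
  · field_simp
    ring

lemma le_recon_of_forall_le (Δx Δt Δv : ℝ) (hΔx : Δx ≠ 0) {g : ℤ → Idx3 → ℝ} {j : Idx3}
    {C : ℝ} (hg : ∀ i, C ≤ g i j) (i : ℤ) : C ≤ recon Δx Δt Δv g i j := by
  rw [recon_eq_fract Δx Δt Δv hΔx]
  set t := Int.fract (((i : ℝ) * Δx - Δt * ((j 0 : ℝ) * Δv)) / Δx)
  have ht₀ : 0 ≤ t := Int.fract_nonneg _
  have ht₁ : 0 ≤ 1 - t := sub_nonneg.mpr (Int.fract_lt_one _).le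
  calc C = t * C + (1 - t) * C := by ring
    _ ≤ _ := add_le_add (mul_le_mul_of_nonneg_left (hg _) ht₀)
        (mul_le_mul_of_nonneg_left (hg _) ht₁)

section Iterates

variable (f₀ : ℝ → V3 → ℝ) (κ ν Δx Δt Δv : ℝ)

lemma schemeF_succ (n : ℕ) (i : ℤ) (j : Idx3) :
    schemeF f₀ κ ν Δx Δt Δv (n + 1) i j =
      κ / (κ + Anu ν * Δt) * schemeTilde f₀ κ ν Δx Δt Δv n i j
        + Anu ν * Δt / (κ + Anu ν * Δt) * schemeGauss f₀ κ ν Δx Δt Δv n i j := by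
  cases n <;> rfl

variable {κ ν Δx Δt Δv}

lemma schemeF_succ_lower_bound (hκ : 0 < κ) (hν : ν < 1) (hΔt : 0 ≤ Δt) {n : ℕ}
    {b : Idx3 → ℝ} (hb : ∀ i j, b j ≤ schemeTilde f₀ κ ν Δx Δt Δv n i j)
    (hG : ∀ i j, 0 ≤ schemeGauss f₀ κ ν Δx Δt Δv n i j) (i : ℤ) (j : Idx3) :
    κ / (κ + Anu ν * Δt) * b j ≤ schemeF f₀ κ ν Δx Δt Δv (n + 1) i j := by
  have hA := Anu_pos hν
  rw [schemeF_succ]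
  have hrelax : 0 ≤ Anu ν * Δt / (κ + Anu ν * Δt) * schemeGauss f₀ κ ν Δx Δt Δv n i j := by
    have := hG i j
    positivity
  have htransport := mul_le_mul_of_nonneg_left (hb i j) (by positivity : 0 ≤ κ / (κ + Anu ν * Δt))
  linarith

lemma schemeTilde_lower_bound (hκ : 0 < κ) (hν : ν < 1) (hΔx : Δx ≠ 0) (hΔt : 0 ≤ Δt)
    {b : Idx3 → ℝ} (h0 : ∀ i j, b j ≤ schemeTilde f₀ κ ν Δx Δt Δv 0 i j) :
    ∀ n : ℕ, (∀ m < n, ∀ i j, 0 ≤ schemeGauss f₀ κ ν Δx Δt Δv m i j) →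
      ∀ i j, (κ / (κ + Anu ν * Δt)) ^ n * b j ≤ schemeTilde f₀ κ ν Δx Δt Δv n i j
  | 0, _ => by simpa using h0
  | n + 1, hG => fun i j => by
    have hF := schemeF_succ_lower_bound f₀ hκ hν hΔt
      (schemeTilde_lower_bound hκ hν hΔx hΔt h0 n fun m hm => hG m (by omega))
      (hG n n.lt_succ_self)
    rw [pow_succ', mul_assoc]
    exact le_recon_of_forall_le Δx Δt Δv hΔx (fun i => hF i j) i

end Iterates

lemma exp_neg_mul_le_pow {κ a t : ℝ} (hκ : 0 < κ) (ha : 0 ≤ a) (ht : 0 ≤ t) (n : ℕ) :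
    Real.exp (-(a / κ) * (n * t)) ≤ (κ / (κ + a * t)) ^ n := by
  have hstep : Real.exp (-(a * t / κ)) ≤ κ / (κ + a * t) := by
    rw [Real.exp_neg, show κ / (κ + a * t) = (1 + a * t / κ)⁻¹ by field_simp]
    exact inv_anti₀ (by positivity) (by linarith [Real.add_one_le_exp (a * t / κ)])
  calc Real.exp (-(a / κ) * (n * t)) = Real.exp (-(a * t / κ)) ^ n := by
        rw [← Real.exp_nat_mul]; ring_nf
    _ ≤ _ := pow_le_pow_left₀ (Real.exp_nonneg _) hstep n

theorem scheme_lower_bound_propagation_general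
    (κ ν Δx Δt Δv c₁ c₂ α : ℝ) (hκ : 0 < κ) (hν : ν ∈ Set.Ioo (-(1 / 2) : ℝ) 1)
    (hΔx : 0 < Δx) (hΔt : 0 < Δt)
    (hc₁ : 0 < c₁)
    (f₀ : ℝ → V3 → ℝ) (n : ℕ) (hn : 1 ≤ n)
    (hGauss : ∀ m < n, ∀ (i : ℤ) (j : Idx3), 0 ≤ schemeGauss f₀ κ ν Δx Δt Δv m i j)
    (h0 : ∀ (i : ℤ) (j : Idx3),
      c₁ * Real.exp (-c₂ * enorm3 (gridV Δv j) ^ α) ≤ schemeTilde f₀ κ ν Δx Δt Δv 0 i j) :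
    ∀ (i : ℤ) (j : Idx3),
      c₁ * (κ / (κ + Anu ν * Δt)) ^ n * Real.exp (-c₂ * enorm3 (gridV Δv j) ^ α)
          ≤ schemeF f₀ κ ν Δx Δt Δv n i j ∧
        c₁ * (κ / (κ + Anu ν * Δt)) ^ n * Real.exp (-c₂ * enorm3 (gridV Δv j) ^ α)
          ≤ schemeTilde f₀ κ ν Δx Δt Δv n i j ∧
        c₁ * Real.exp (-(Anu ν / κ) * (n * Δt)) * Real.exp (-c₂ * enorm3 (gridV Δv j) ^ α)
          ≤ c₁ * (κ / (κ + Anu ν * Δt)) ^ n * Real.exp (-c₂ * enorm3 (gridV Δv j) ^ α) := by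
  obtain ⟨k, rfl⟩ : ∃ k, n = k + 1 := ⟨n - 1, by omega⟩
  intro i j
  have htilde := schemeTilde_lower_bound f₀ hκ hν.2 hΔx.ne' hΔt.le h0
  have hF := schemeF_succ_lower_bound f₀ hκ hν.2 hΔt.le
    (htilde k fun m hm => hGauss m (by omega)) (hGauss k k.lt_succ_self) i j
  refine ⟨(le_of_eq (by ring)).trans hF, (le_of_eq (by ring)).trans (htilde _ hGauss i j), ?_⟩
  gcongr
  exact exp_neg_mul_le_pow hκ (Anu_pos hν.2).le hΔt.le _

/-- propagation of the Gaussian-type lower bound along the scheme iterates. -/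
theorem scheme_lower_bound_propagation
    (κ ν Δx Δt Δv c₁ c₂ α : ℝ) (hκ : 0 < κ) (hν : ν ∈ Set.Ioo (-(1 / 2) : ℝ) 1)
    (hΔx : 0 < Δx) (hΔt : 0 < Δt) (hΔv : 0 < Δv)
    (hc₁ : 0 < c₁) (hc₂ : 0 < c₂) (hα : 0 < α)
    (f₀ : ℝ → V3 → ℝ) (n : ℕ) (hn : 1 ≤ n)
    (hGauss : ∀ m < n, ∀ (i : ℤ) (j : Idx3), 0 ≤ schemeGauss f₀ κ ν Δx Δt Δv m i j)
    (h0 : ∀ (i : ℤ) (j : Idx3),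
      c₁ * Real.exp (-c₂ * enorm3 (gridV Δv j) ^ α) ≤ schemeTilde f₀ κ ν Δx Δt Δv 0 i j) :
    ∀ (i : ℤ) (j : Idx3),
      c₁ * (κ / (κ + Anu ν * Δt)) ^ n * Real.exp (-c₂ * enorm3 (gridV Δv j) ^ α)
          ≤ schemeF f₀ κ ν Δx Δt Δv n i j ∧
        c₁ * (κ / (κ + Anu ν * Δt)) ^ n * Real.exp (-c₂ * enorm3 (gridV Δv j) ^ α)
          ≤ schemeTilde f₀ κ ν Δx Δt Δv n i j ∧
        c₁ * Real.exp (-(Anu ν / κ) * (n * Δt)) * Real.exp (-c₂ * enorm3 (gridV Δv j) ^ α)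
          ≤ c₁ * (κ / (κ + Anu ν * Δt)) ^ n * Real.exp (-c₂ * enorm3 (gridV Δv j) ^ α) :=
  scheme_lower_bound_propagation_general κ ν Δx Δt Δv c₁ c₂ α hκ hν hΔx hΔt hc₁ f₀ n hn hGauss h0

end
end
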